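/- Let G be a claw-free graph and M an induced matching of G that is maximal and stable under the local-search exchange operation. For any edge xy ∈ M, with N₁ the set of vertices of (N_G(x) ∪ N_G(y)) \ {x,y} incident with a private conflict edge of xy and N₂ the set of vertices outside N_G[x] ∪ N_G[y] incident with a private conflict edge of xy, every vertex of N₁ has at most one neighbor in N₂; consequently the number of edges between N₁ and N₂ is at most |N₁|. -/

import Mathlib

/-!
Every vertex of `N₁` is adjacent to `x` or `y`, while no vertex of `N₂` is adjacent or equal to
either. Two vertices of `N₂` lie on private conflict edges of `xy`, so an edge between them would
conflict with no edge of `M` and could be added to `M`; hence `N₂` is independent. A vertex of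
`N₁` with two neighbours in `N₂` would then be the centre of a claw whose third leaf is `x` or `y`.
Summing the resulting bound over `N₁` counts every edge between `N₁` and `N₂`.
-/

open Classical

variable {V : Type*}

/-- Two edges (as `Sym2 V`) are in conflict: they are at distance at most 2
in the line graph, i.e. they share a vertex or some edge of `G` joins them. -/
def Conflict (G : SimpleGraph V) (e f : Sym2 V) : Prop :=
  ∃ a ∈ e, ∃ b ∈ f, a = b ∨ G.Adj a b

/-- `C_G(e)`: the set of edges of `G` in conflict with `e` (including `e`). -/
def CSet (G : SimpleGraph V) (e : Sym2 V) : Set (Sym2 V) :=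
  {f | f ∈ G.edgeSet ∧ Conflict G e f}

/-- `PC_G(M, e)`: the private conflict edges of `e` with respect to `M`. -/
def PCSet (G : SimpleGraph V) (M : Set (Sym2 V)) (e : Sym2 V) : Set (Sym2 V) :=
  CSet G e \ ⋃ f ∈ M \ {e}, CSet G f

/-- `M` is an induced matching of `G`. -/
def IsInducedMatching (G : SimpleGraph V) (M : Set (Sym2 V)) : Prop :=
  M ⊆ G.edgeSet ∧ ∀ e ∈ M, ∀ f ∈ M, e ≠ f → ¬ Conflict G e f

/-- `M` is a maximal induced matching of `G`. -/
def IsMaximalInducedMatching (G : SimpleGraph V) (M : Set (Sym2 V)) : Prop :=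
  IsInducedMatching G M ∧ ∀ M', IsInducedMatching G M' → M ⊆ M' → M' = M

/-- `M` is stable under the local-search exchange operation: any two distinct
private conflict edges of an edge of `M` conflict with each other. -/
def LSStable (G : SimpleGraph V) (M : Set (Sym2 V)) : Prop :=
  ∀ e ∈ M, ∀ e' ∈ PCSet G M e, ∀ e'' ∈ PCSet G M e, e' ≠ e'' → e'' ∈ CSet G e'

/-- The edges of `G` with both endpoints in `S`. -/
def edgesWithin (G : SimpleGraph V) (S : Set V) : Set (Sym2 V) :=
  {e | e ∈ G.edgeSet ∧ ∀ a ∈ e, a ∈ S}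

/-- The edges of `G` with one endpoint in `S` and the other in `T`. -/
def edgesBetween (G : SimpleGraph V) (S T : Set V) : Set (Sym2 V) :=
  {e | e ∈ G.edgeSet ∧ ∃ a b : V, e = s(a, b) ∧ a ∈ S ∧ b ∈ T}

/-- `G` has no induced cycle of length 4. -/
def C4Free (G : SimpleGraph V) : Prop :=
  ¬ ∃ a b c d : V, G.Adj a b ∧ G.Adj b c ∧ G.Adj c d ∧ G.Adj d a ∧
      ¬ G.Adj a c ∧ ¬ G.Adj b d ∧ a ≠ c ∧ b ≠ d

/-- `G` has no induced cycle of length 5. -/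
def C5Free (G : SimpleGraph V) : Prop :=
  ¬ ∃ a b c d e : V, G.Adj a b ∧ G.Adj b c ∧ G.Adj c d ∧ G.Adj d e ∧ G.Adj e a ∧
      ¬ G.Adj a c ∧ ¬ G.Adj a d ∧ ¬ G.Adj b d ∧ ¬ G.Adj b e ∧ ¬ G.Adj c e ∧
      a ≠ c ∧ a ≠ d ∧ b ≠ d ∧ b ≠ e ∧ c ≠ e

/-- `G` has no induced `K_{1,3}` (claw). -/
def ClawFree (G : SimpleGraph V) : Prop :=
  ¬ ∃ v a b c : V, G.Adj v a ∧ G.Adj v b ∧ G.Adj v c ∧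
      ¬ G.Adj a b ∧ ¬ G.Adj a c ∧ ¬ G.Adj b c ∧ a ≠ b ∧ a ≠ c ∧ b ≠ c

variable {G : SimpleGraph V}

theorem Conflict.symm {e f : Sym2 V} : Conflict G e f → Conflict G f e := by
  rintro ⟨a, ha, b, hb, h⟩
  exact ⟨b, hb, a, ha, h.imp Eq.symm G.adj_symm⟩

theorem Conflict.refl (e : Sym2 V) : Conflict G e e :=
  ⟨e.out.1, Sym2.out_fst_mem e, e.out.1, Sym2.out_fst_mem e, Or.inl rfl⟩

theorem not_conflict_of_mem_PCSet {M : Set (Sym2 V)} {m e f : Sym2 V}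
    (he : e ∈ PCSet G M m) (hf : f ∈ M) (hfm : f ≠ m) : ¬ Conflict G f e :=
  fun hc => he.2 (Set.mem_biUnion (show f ∈ M \ {m} from ⟨hf, hfm⟩) ⟨he.1.1, hc⟩)

theorem IsInducedMatching.insert {M : Set (Sym2 V)} (hM : IsInducedMatching G M)
    {e : Sym2 V} (he : e ∈ G.edgeSet) (hfree : ∀ f ∈ M, ¬ Conflict G f e) :
    IsInducedMatching G (insert e M) := by
  refine ⟨Set.insert_subset he hM.1, ?_⟩
  rintro f (rfl | hf) g (rfl | hg) hfg
  · exact absurd rfl hfg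
  · exact fun hc => hfree g hg hc.symm
  · exact hfree f hf
  · exact hM.2 f hf g hg hfg

theorem IsMaximalInducedMatching.exists_conflict {M : Set (Sym2 V)}
    (hM : IsMaximalInducedMatching G M) {e : Sym2 V} (he : e ∈ G.edgeSet) :
    ∃ f ∈ M, Conflict G f e := by
  by_contra! hfree
  have hins : insert e M = M := hM.2 _ (hM.1.insert he hfree) (Set.subset_insert e M)
  exact hfree e (hins ▸ Set.mem_insert e M) (Conflict.refl e)

theorem IsMaximalInducedMatching.not_adj_of_mem_PCSet {M : Set (Sym2 V)}
    (hM : IsMaximalInducedMatching G M) {m e₁ e₂ : Sym2 V} {w₁ w₂ : V}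
    (he₁ : e₁ ∈ PCSet G M m) (he₂ : e₂ ∈ PCSet G M m) (hw₁ : w₁ ∈ e₁) (hw₂ : w₂ ∈ e₂)
    (hfar₁ : ∀ a ∈ m, a ≠ w₁ ∧ ¬ G.Adj a w₁) (hfar₂ : ∀ a ∈ m, a ≠ w₂ ∧ ¬ G.Adj a w₂) :
    ¬ G.Adj w₁ w₂ := by
  intro hadj
  obtain ⟨f, hf, a, ha, b, hb, hab⟩ := hM.exists_conflict (e := s(w₁, w₂)) hadj
  by_cases hfm : f = m
  · subst hfm
    rcases Sym2.mem_iff.1 hb with rfl | rfl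
    · exact (hfar₁ a ha).elim hab.elim
    · exact (hfar₂ a ha).elim hab.elim
  · rcases Sym2.mem_iff.1 hb with rfl | rfl
    · exact not_conflict_of_mem_PCSet he₁ hf hfm ⟨a, ha, b, hw₁, hab⟩
    · exact not_conflict_of_mem_PCSet he₂ hf hfm ⟨a, ha, b, hw₂, hab⟩

theorem ClawFree.eq_of_adj (hG : ClawFree G) {u v w₁ w₂ : V} (hv : G.Adj u v)
    (h₁ : G.Adj u w₁) (h₂ : G.Adj u w₂) (hv₁ : ¬ G.Adj v w₁) (hv₂ : ¬ G.Adj v w₂)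
    (hne₁ : v ≠ w₁) (hne₂ : v ≠ w₂) (h₁₂ : ¬ G.Adj w₁ w₂) : w₁ = w₂ := by
  by_contra hne
  exact hG ⟨u, v, w₁, w₂, hv, h₁, h₂, hv₁, hv₂, h₁₂, hne₁, hne₂, hne⟩

theorem ncard_edgesBetween_le_ncard [Finite V] {S T : Set V}
    (h : ∀ s ∈ S, (G.neighborSet s ∩ T).ncard ≤ 1) :
    (edgesBetween G S T).ncard ≤ S.ncard := by
  have hsub : edgesBetween G S T ⊆
      ⋃ s ∈ S.toFinite.toFinset, (fun t => s(s, t)) '' (G.neighborSet s ∩ T) := by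
    rintro _ ⟨hE, a, b, rfl, ha, hb⟩
    exact Set.mem_biUnion (S.toFinite.mem_toFinset.2 ha) ⟨b, ⟨hE, hb⟩, rfl⟩
  calc (edgesBetween G S T).ncard
      ≤ (⋃ s ∈ S.toFinite.toFinset, (fun t => s(s, t)) '' (G.neighborSet s ∩ T)).ncard :=
        Set.ncard_le_ncard hsub
    _ ≤ ∑ s ∈ S.toFinite.toFinset, ((fun t => s(s, t)) '' (G.neighborSet s ∩ T)).ncard :=
        Finset.set_ncard_biUnion_le _ _
    _ ≤ ∑ _s ∈ S.toFinite.toFinset, 1 :=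
        Finset.sum_le_sum fun s hs =>
          (Set.ncard_image_le).trans (h s (S.toFinite.mem_toFinset.1 hs))
    _ = S.ncard := by rw [Finset.sum_const, smul_eq_mul, mul_one, Set.ncard_eq_toFinset_card]

theorem stmt19_general [Fintype V] (G : SimpleGraph V) (hclaw : ClawFree G)
    (M : Set (Sym2 V)) (hmax : IsMaximalInducedMatching G M)
    (x y : V)
    (N₁ N₂ : Set V)
    (hN₁ : N₁ = {v : V | v ∈ (G.neighborSet x ∪ G.neighborSet y) \ {x, y} ∧
      ∃ e ∈ PCSet G M s(x, y), v ∈ e})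
    (hN₂ : N₂ = {v : V | v ∉ (G.neighborSet x ∪ {x}) ∪ (G.neighborSet y ∪ {y}) ∧
      ∃ e ∈ PCSet G M s(x, y), v ∈ e}) :
    (∀ u ∈ N₁, (G.neighborSet u ∩ N₂).ncard ≤ 1) ∧
    (edgesBetween G N₁ N₂).ncard ≤ N₁.ncard := by
  have hN₂_priv : ∀ w ∈ N₂, ∃ e ∈ PCSet G M s(x, y), w ∈ e := by
    rw [hN₂]
    exact fun w hw => hw.2
  have hfar : ∀ w ∈ N₂, ∀ a ∈ s(x, y), a ≠ w ∧ ¬ G.Adj a w := by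
    rw [hN₂]
    rintro w ⟨hout, -⟩ a ha
    rcases Sym2.mem_iff.1 ha with rfl | rfl <;> grind [SimpleGraph.mem_neighborSet]
  have hindep : ∀ w₁ ∈ N₂, ∀ w₂ ∈ N₂, ¬ G.Adj w₁ w₂ := by
    intro w₁ hw₁ w₂ hw₂
    obtain ⟨e₁, he₁, hwe₁⟩ := hN₂_priv w₁ hw₁
    obtain ⟨e₂, he₂, hwe₂⟩ := hN₂_priv w₂ hw₂
    exact hmax.not_adj_of_mem_PCSet he₁ he₂ hwe₁ hwe₂ (hfar w₁ hw₁) (hfar w₂ hw₂)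
  have hnear : ∀ u ∈ N₁, ∃ v ∈ s(x, y), G.Adj u v := by
    rw [hN₁]
    intro u hu
    rcases hu.1.1 with h | h
    · exact ⟨x, Sym2.mem_mk_left x y, h.symm⟩
    · exact ⟨y, Sym2.mem_mk_right x y, h.symm⟩
  have hunique : ∀ u ∈ N₁, (G.neighborSet u ∩ N₂).ncard ≤ 1 := by
    intro u hu
    obtain ⟨v, hv, huv⟩ := hnear u hu
    refine Set.ncard_le_one_iff_subsingleton.2 ?_
    rintro w₁ ⟨hu₁, hw₁⟩ w₂ ⟨hu₂, hw₂⟩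
    exact hclaw.eq_of_adj huv hu₁ hu₂ (hfar w₁ hw₁ v hv).2 (hfar w₂ hw₂ v hv).2
      (hfar w₁ hw₁ v hv).1 (hfar w₂ hw₂ v hv).1 (hindep w₁ hw₁ w₂ hw₂)
  exact ⟨hunique, ncard_edgesBetween_le_ncard hunique⟩

/-- in claw-free graphs, each vertex of `N₁` has at most one neighbor
in `N₂`, hence `m_G(N₁, N₂) ≤ |N₁|`. -/
theorem stmt19 [Fintype V] (G : SimpleGraph V) (hclaw : ClawFree G)
    (M : Set (Sym2 V)) (hmax : IsMaximalInducedMatching G M) (hstab : LSStable G M)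
    (x y : V) (hxy : G.Adj x y) (hmem : s(x, y) ∈ M)
    (N₁ N₂ : Set V)
    (hN₁ : N₁ = {v : V | v ∈ (G.neighborSet x ∪ G.neighborSet y) \ {x, y} ∧
      ∃ e ∈ PCSet G M s(x, y), v ∈ e})
    (hN₂ : N₂ = {v : V | v ∉ (G.neighborSet x ∪ {x}) ∪ (G.neighborSet y ∪ {y}) ∧
      ∃ e ∈ PCSet G M s(x, y), v ∈ e}) :
    (∀ u ∈ N₁, (G.neighborSet u ∩ N₂).ncard ≤ 1) ∧
    (edgesBetween G N₁ N₂).ncard ≤ N₁.ncard :=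
  stmt19_general G hclaw M hmax x y N₁ N₂ hN₁ hN₂
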